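/- Let β > 1, let L: [0,1] → [0,1] be Lipschitz with constant κ, and φ: ℕ → (0,1] a positive function. For any n with β^n > 3κ and any full word w ∈ Ξ_n(β), the set 𝔍(w; L, φ) = {x ∈ 𝔍(w) : |T_β^n x − L(x)| < φ(n)} is an interval with (1/4) φ(n) β^{-n} ≤ |𝔍(w; L, φ)|, and for any admissible w ∈ Σ_n(β), |𝔍(w; L, φ)| ≤ 3 φ(n) β^{-n}. -/

import Mathlib

open MeasureTheory Set
open scoped Classical

/-- The beta-transformation `T_β x = βx - ⌊βx⌋`. -/
noncomputable def betaT (β x : ℝ) : ℝ := Int.fract (β * x)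

/-- The `k`-th digit (0-indexed) of the β-expansion of `x`: `ε_{k+1}(x,β) = ⌊β T_β^k x⌋`. -/
noncomputable def betaDigit (β x : ℝ) (k : ℕ) : ℕ := ⌊β * (betaT β)^[k] x⌋₊

/-- `Σ_n(β)`: admissible words of length `n`, i.e. prefixes of β-expansions of points of `[0,1)`. -/
def admWords (β : ℝ) (n : ℕ) : Set (Fin n → ℕ) :=
  {w | ∃ x ∈ Set.Ico (0:ℝ) 1, ∀ i : Fin n, w i = betaDigit β x i}

/-- The cylinder `𝔍(w)` of points of `[0,1)` whose β-expansion starts with `w`. -/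
def cyl (β : ℝ) {n : ℕ} (w : Fin n → ℕ) : Set ℝ :=
  {x | x ∈ Set.Ico (0:ℝ) 1 ∧ ∀ i : Fin n, betaDigit β x i = w i}

/-- `Ξ_n(β)`: admissible words of length `n` whose cylinder is full (of length `β^{-n}`). -/
def fullWords (β : ℝ) (n : ℕ) : Set (Fin n → ℕ) :=
  {w | w ∈ admWords β n ∧ volume (cyl β w) = ENNReal.ofReal (1 / β ^ n)}

/-- `ε(β)`: the β-expansion of 1 (0-indexed). -/
noncomputable def eps1 (β : ℝ) (k : ℕ) : ℕ := betaDigit β 1 k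

/-- `ε*(β)`: the infinite β-expansion of 1.  If `ε(β)` has a last nonzero digit at
(0-indexed) position `N`, it is the periodic sequence `(ε_0 ⋯ ε_{N-1} (ε_N - 1))^∞`;
otherwise it is `ε(β)` itself. -/

noncomputable def epsStar (β : ℝ) : ℕ → ℕ :=
  if h : ∃ N, eps1 β N ≠ 0 ∧ ∀ k, N < k → eps1 β k = 0 then
    fun k => if k % (h.choose + 1) = h.choose then eps1 β h.choose - 1
             else eps1 β (k % (h.choose + 1))
  else eps1 β

/-- Strict lexicographic order on sequences of nonnegative integers. -/
def lexLt (a b : ℕ → ℕ) : Prop := ∃ i, (∀ j, j < i → a j = b j) ∧ a i < b i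

/-- Strict lexicographic order on words of length `n`. -/
def wordLt {n : ℕ} (a b : Fin n → ℕ) : Prop :=
  ∃ i : Fin n, (∀ j, j < i → a j = b j) ∧ a i < b i

/-- `Ω_n(x)`: all length-`n` prefixes of β-expansions of `x` over all bases `β > 1`. -/
def prefWords (x : ℝ) (n : ℕ) : Set (Fin n → ℕ) :=
  {w | ∃ β : ℝ, 1 < β ∧ ∀ i : Fin n, w i = betaDigit β x i}

/-- The parameter cylinder `I(w) = {β > 1 : ε_1(x,β)⋯ε_n(x,β) = w}`. -/
def pcyl (x : ℝ) {n : ℕ} (w : Fin n → ℕ) : Set ℝ :=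
  {β | 1 < β ∧ ∀ i : Fin n, betaDigit β x i = w i}

/-- `Λ_n(x)`: words whose parameter cylinder is full, i.e. `{T_β^n x : β ∈ I(w)} = [0,1)`. -/
def pfull (x : ℝ) (n : ℕ) : Set (Fin n → ℕ) :=
  {w | w ∈ prefWords x n ∧ (fun β => (betaT β)^[n] x) '' pcyl x w = Set.Ico (0:ℝ) 1}

/-!
On a cylinder `𝔍(w)` of length `n` the map `T_β^n` is affine, `T_β^n x = β^n (x - a)` with
`a = ∑ wᵢ β^{-i}`, so `f x = T_β^n x - L x` is an affine map of slope `β^n` perturbed by a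
`κ`-Lipschitz one; once `β^n > 3κ` its increments lie between `(2/3) β^n` and `(4/3) β^n` times
those of `x`. The lower bound makes `f` increasing on the interval `𝔍(w)`, so `{|f| < φ}` is an
interval of length at most `2φ / ((2/3) β^n)`. A full cylinder fills `(a, a + β^{-n})`, and
`f a = -L a ≤ 0 ≤ 1 - L (a + β^{-n}) = f (a + β^{-n})` gives a zero `t` of `f` there; by the
upper bound `|f| < φ` on the `φ β^{-n} / 4`-neighbourhood of `t`, which meets `(a, a + β^{-n})`
in an interval at least that long.
-/

lemma Set.OrdConnected.sep_abs_lt {S : Set ℝ} {f : ℝ → ℝ} (hS : S.OrdConnected)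
    (hf : MonotoneOn f S) (r : ℝ) : {x ∈ S | |f x| < r}.OrdConnected := by
  refine ⟨fun x hx y hy z hz => ?_⟩
  have hzS : z ∈ S := hS.out hx.1 hy.1 hz
  exact ⟨hzS, abs_lt.2 ⟨(abs_lt.1 hx.2).1.trans_le (hf hx.1 hzS hz.1),
    (hf hzS hy.1 hz.2).trans_lt (abs_lt.1 hy.2).2⟩⟩

lemma volume_le_ofReal_of_forall_sub_le {T : Set ℝ} {D : ℝ}
    (h : ∀ u ∈ T, ∀ v ∈ T, u ≤ v → v - u ≤ D) : volume T ≤ ENNReal.ofReal D := by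
  refine (Real.volume_le_diam T).trans (Metric.ediam_le_of_forall_dist_le fun x hx y hy => ?_)
  rw [Real.dist_eq]
  rcases le_total x y with hxy | hxy
  · rw [abs_sub_comm, abs_of_nonneg (sub_nonneg.2 hxy)]
    exact h x hx y hy hxy
  · rw [abs_of_nonneg (sub_nonneg.2 hxy)]
    exact h y hy x hx hxy

lemma volume_sep_abs_lt_le {S : Set ℝ} {f : ℝ → ℝ} {m : ℝ} (hm : 0 < m)
    (hf : ∀ u ∈ S, ∀ v ∈ S, u ≤ v → m * (v - u) ≤ f v - f u) (r : ℝ) :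
    volume {x ∈ S | |f x| < r} ≤ ENNReal.ofReal (2 * r / m) :=
  volume_le_ofReal_of_forall_sub_le fun u hu v hv huv => by
    rw [le_div_iff₀ hm]
    linarith [hf u hu.1 v hv.1 huv, (abs_lt.1 hu.2).1, (abs_lt.1 hv.2).2]

lemma ofReal_le_volume_Ioo_inter_Ioo {a b t ρ : ℝ} (ht : t ∈ Icc a b) (hρ : 0 ≤ ρ)
    (hρab : ρ ≤ b - a) : ENNReal.ofReal ρ ≤ volume (Ioo a b ∩ Ioo (t - ρ) (t + ρ)) := by
  rw [Ioo_inter_Ioo, Real.volume_Ioo]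
  refine ENNReal.ofReal_le_ofReal ?_
  rcases le_total a (t - ρ) with h₁ | h₁ <;> rcases le_total b (t + ρ) with h₂ | h₂ <;>
    simp only [max_eq_left, max_eq_right, min_eq_left, min_eq_right, h₁, h₂] <;>
    linarith [ht.1, ht.2]

lemma Ioo_subset_of_ordConnected_of_volume_eq {S : Set ℝ} {a b : ℝ} (hS : S.OrdConnected)
    (hab : a < b) (hSab : S ⊆ Icc a b) (hvol : volume S = ENNReal.ofReal (b - a)) :
    Ioo a b ⊆ S := by
  have hne : S.Nonempty := nonempty_of_measure_ne_zero (μ := volume)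
    (by rw [hvol]; exact (ENNReal.ofReal_pos.2 (sub_pos.2 hab)).ne')
  have hbddBelow : BddBelow S := bddBelow_Icc.mono hSab
  have hbddAbove : BddAbove S := bddAbove_Icc.mono hSab
  have haS : a ≤ sInf S := le_csInf hne fun x hx => (hSab hx).1
  have hSb : sSup S ≤ b := csSup_le hne fun x hx => (hSab hx).2
  have hlen : b - a ≤ sSup S - sInf S := by
    refine (ENNReal.ofReal_le_ofReal_iff'.1 ?_).resolve_right (by linarith)
    calc ENNReal.ofReal (b - a) = volume S := hvol.symm
      _ ≤ volume (Icc (sInf S) (sSup S)) :=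
        measure_mono (subset_Icc_csInf_csSup hbddBelow hbddAbove)
      _ = ENNReal.ofReal (sSup S - sInf S) := Real.volume_Icc
  have hIoo := IsConnected.Ioo_csInf_csSup_subset ⟨hne, hS.isPreconnected⟩ hbddBelow hbddAbove
  rwa [show sInf S = a by linarith, show sSup S = b by linarith] at hIoo

section LipschitzPerturbation

variable {s : Set ℝ} {κ : NNReal} {L : ℝ → ℝ} {B c u v : ℝ}

lemma two_thirds_mul_le_sub_of_lipschitzOnWith (hL : LipschitzOnWith κ L s)
    (hB : 3 * (κ : ℝ) < B) (hu : u ∈ s) (hv : v ∈ s) (huv : u ≤ v) :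
    2 / 3 * B * (v - u) ≤ (B * (v - c) - L v) - (B * (u - c) - L u) := by
  have hLuv : |L v - L u| ≤ κ * |v - u| := by
    simpa only [Real.dist_eq] using hL.dist_le_mul v hv u hu
  rw [abs_of_nonneg (sub_nonneg.2 huv)] at hLuv
  nlinarith [(abs_le.1 hLuv).2, mul_le_mul_of_nonneg_right hB.le (sub_nonneg.2 huv)]

lemma abs_sub_le_four_thirds_mul_of_lipschitzOnWith (hL : LipschitzOnWith κ L s)
    (hB : 3 * (κ : ℝ) < B) (hu : u ∈ s) (hv : v ∈ s) :
    |(B * (v - c) - L v) - (B * (u - c) - L u)| ≤ 4 / 3 * B * |v - u| := by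
  have hLuv : |L v - L u| ≤ κ * |v - u| := by
    simpa only [Real.dist_eq] using hL.dist_le_mul v hv u hu
  have hB0 : 0 < B := lt_of_le_of_lt (by positivity) hB
  calc |(B * (v - c) - L v) - (B * (u - c) - L u)| = |B * (v - u) - (L v - L u)| := by ring_nf
    _ ≤ |B * (v - u)| + |L v - L u| := abs_sub _ _
    _ ≤ B * |v - u| + κ * |v - u| := by rw [abs_mul, abs_of_pos hB0]; gcongr
    _ ≤ 4 / 3 * B * |v - u| := by nlinarith [abs_nonneg (v - u)]

end LipschitzPerturbation

section BetaExpansion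

variable {β : ℝ}

lemma betaT_mem_Ico (β x : ℝ) : betaT β x ∈ Ico 0 1 :=
  ⟨Int.fract_nonneg _, Int.fract_lt_one _⟩

lemma iterate_betaT_mem_Ico {x : ℝ} (hx : x ∈ Ico 0 1) : ∀ k, (betaT β)^[k] x ∈ Ico 0 1
  | 0 => hx
  | k + 1 => by rw [Function.iterate_succ_apply']; exact betaT_mem_Ico _ _

lemma iterate_succ_betaT (hβ : 0 ≤ β) {x : ℝ} (hx : x ∈ Ico 0 1) (k : ℕ) :
    (betaT β)^[k + 1] x = β * (betaT β)^[k] x - betaDigit β x k := by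
  rw [Function.iterate_succ_apply', betaT, Int.fract, betaDigit,
    natCast_floor_eq_intCast_floor (mul_nonneg hβ (iterate_betaT_mem_Ico hx k).1)]

lemma iterate_betaT_eq (hβ : 0 < β) {x : ℝ} (hx : x ∈ Ico 0 1) (n : ℕ) :
    (betaT β)^[n] x = β ^ n * (x - ∑ i ∈ Finset.range n, (betaDigit β x i : ℝ) / β ^ (i + 1)) := by
  induction n with
  | zero => simp
  | succ n ih =>
    rw [iterate_succ_betaT hβ.le hx, ih, Finset.sum_range_succ]
    field_simp
    ring

/-- The point `a` of `𝔍(w) = [a, a + |𝔍(w)|)`. -/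
noncomputable def cylStart (β : ℝ) {n : ℕ} (w : Fin n → ℕ) : ℝ :=
  ∑ i : Fin n, (w i : ℝ) / β ^ ((i : ℕ) + 1)

lemma iterate_betaT_eq_of_mem_cyl (hβ : 0 < β) {n : ℕ} {w : Fin n → ℕ} {x : ℝ}
    (hx : x ∈ cyl β w) : (betaT β)^[n] x = β ^ n * (x - cylStart β w) := by
  rw [iterate_betaT_eq hβ hx.1, cylStart,
    ← Fin.sum_univ_eq_sum_range (fun i => (betaDigit β x i : ℝ) / β ^ (i + 1))]
  simp only [hx.2]

lemma betaDigit_eq_and_iterate_betaT_mono (hβ : 0 ≤ β) {x y z : ℝ} (hx : x ∈ Ico 0 1)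
    (hy : y ∈ Ico 0 1) (hxz : x ≤ z) (hzy : z ≤ y) (k : ℕ)
    (hd : ∀ i < k, betaDigit β x i = betaDigit β y i) :
    (∀ i < k, betaDigit β z i = betaDigit β x i) ∧
      (betaT β)^[k] x ≤ (betaT β)^[k] z ∧ (betaT β)^[k] z ≤ (betaT β)^[k] y := by
  have hz : z ∈ Ico 0 1 := ⟨hx.1.trans hxz, hzy.trans_lt hy.2⟩
  induction k with
  | zero => exact ⟨fun i hi => absurd hi (Nat.not_lt_zero i), hxz, hzy⟩
  | succ k ih =>
    obtain ⟨hdz, hxz', hzy'⟩ := ih fun i hi => hd i (Nat.lt_succ_of_lt hi)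
    have hxzk : betaDigit β x k ≤ betaDigit β z k :=
      Nat.floor_mono (mul_le_mul_of_nonneg_left hxz' hβ)
    have hzyk : betaDigit β z k ≤ betaDigit β y k :=
      Nat.floor_mono (mul_le_mul_of_nonneg_left hzy' hβ)
    have hxyk := hd k k.lt_succ_self
    have hk : betaDigit β z k = betaDigit β x k := le_antisymm (hxyk ▸ hzyk) hxzk
    refine ⟨fun i hi => ?_, ?_, ?_⟩
    · rcases Nat.lt_succ_iff_lt_or_eq.1 hi with hi | rfl
      exacts [hdz i hi, hk]
    · rw [iterate_succ_betaT hβ hx, iterate_succ_betaT hβ hz, hk]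
      gcongr
    · rw [iterate_succ_betaT hβ hz, iterate_succ_betaT hβ hy, hk, hxyk]
      gcongr

lemma ordConnected_cyl (hβ : 0 ≤ β) {n : ℕ} (w : Fin n → ℕ) : (cyl β w).OrdConnected := by
  refine ⟨fun x hx y hy z hz => ⟨⟨hx.1.1.trans hz.1, hz.2.trans_lt hy.1.2⟩, fun i => ?_⟩⟩
  obtain ⟨hdz, -⟩ := betaDigit_eq_and_iterate_betaT_mono hβ hx.1 hy.1 hz.1 hz.2 n
    fun i hi => by rw [hx.2 ⟨i, hi⟩, hy.2 ⟨i, hi⟩]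
  rw [hdz i i.2, hx.2 i]

lemma cyl_subset_Ico (hβ : 0 < β) {n : ℕ} (w : Fin n → ℕ) :
    cyl β w ⊆ Ico (cylStart β w) (cylStart β w + 1 / β ^ n) := by
  intro x hx
  have hT := iterate_betaT_mem_Ico (β := β) hx.1 n
  rw [iterate_betaT_eq_of_mem_cyl hβ hx] at hT
  have hβn : 0 < β ^ n := pow_pos hβ n
  refine ⟨sub_nonneg.1 ((mul_nonneg_iff_of_pos_left hβn).1 hT.1), ?_⟩
  rw [← sub_lt_iff_lt_add', lt_div_iff₀ hβn]
  linarith [hT.2]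

lemma Ioo_subset_cyl_of_mem_fullWords (hβ : 0 < β) {n : ℕ} {w : Fin n → ℕ}
    (hw : w ∈ fullWords β n) : Ioo (cylStart β w) (cylStart β w + 1 / β ^ n) ⊆ cyl β w :=
  Ioo_subset_of_ordConnected_of_volume_eq (ordConnected_cyl hβ.le w)
    (lt_add_of_pos_right _ (by positivity)) ((cyl_subset_Ico hβ w).trans Ico_subset_Icc_self)
    (by rw [hw.2, add_sub_cancel_left])

lemma Icc_cylStart_subset_of_mem_fullWords (hβ : 0 < β) {n : ℕ} {w : Fin n → ℕ}
    (hw : w ∈ fullWords β n) : Icc (cylStart β w) (cylStart β w + 1 / β ^ n) ⊆ Icc 0 1 := by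
  rw [← closure_Ioo (lt_add_of_pos_right _ (by positivity)).ne, ← closure_Ico zero_ne_one]
  exact closure_mono ((Ioo_subset_cyl_of_mem_fullWords hβ hw).trans fun x hx => hx.1)

lemma exists_eq_zero_of_mem_fullWords (hβ : 0 < β) {κ : NNReal} {L : ℝ → ℝ}
    (hL : LipschitzOnWith κ L (Icc 0 1)) (hL01 : ∀ y ∈ Icc (0 : ℝ) 1, L y ∈ Icc (0 : ℝ) 1)
    {n : ℕ} {w : Fin n → ℕ} (hw : w ∈ fullWords β n) :
    ∃ t ∈ Icc (cylStart β w) (cylStart β w + 1 / β ^ n),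
      β ^ n * (t - cylStart β w) - L t = 0 := by
  set a := cylStart β w
  have hIcc := Icc_cylStart_subset_of_mem_fullWords hβ hw
  have hδ : a ≤ a + 1 / β ^ n := le_add_of_nonneg_right (by positivity)
  have hcont : ContinuousOn (fun x => β ^ n * (x - a) - L x) (Icc a (a + 1 / β ^ n)) :=
    (continuous_const.mul (continuous_id.sub continuous_const)).continuousOn.sub
      (hL.continuousOn.mono hIcc)
  refine intermediate_value_Icc hδ hcont ⟨?_, ?_⟩
  · have := (hL01 a (hIcc (left_mem_Icc.2 hδ))).1
    simp only [sub_self, mul_zero, zero_sub]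
    linarith
  · have := (hL01 _ (hIcc (right_mem_Icc.2 hδ))).2
    simp only [add_sub_cancel_left, mul_one_div_cancel (pow_pos hβ n).ne']
    linarith

lemma ofReal_le_volume_sep_cyl (hβ : 0 < β) {κ : NNReal} {L : ℝ → ℝ}
    (hL : LipschitzOnWith κ L (Icc 0 1)) (hL01 : ∀ y ∈ Icc (0 : ℝ) 1, L y ∈ Icc (0 : ℝ) 1)
    {n : ℕ} (hn : 3 * (κ : ℝ) < β ^ n) {w : Fin n → ℕ} (hw : w ∈ fullWords β n) {r : ℝ}
    (hr0 : 0 < r) (hr1 : r ≤ 1) :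
    ENNReal.ofReal (r / (4 * β ^ n)) ≤
      volume {x ∈ cyl β w | |β ^ n * (x - cylStart β w) - L x| < r} := by
  have hβn : 0 < β ^ n := pow_pos hβ n
  have hIcc := Icc_cylStart_subset_of_mem_fullWords hβ hw
  obtain ⟨t, ht, hft⟩ := exists_eq_zero_of_mem_fullWords hβ hL hL01 hw
  refine (ofReal_le_volume_Ioo_inter_Ioo ht (by positivity) ?_).trans (measure_mono ?_)
  · rw [add_sub_cancel_left]
    gcongr
    linarith
  · rintro z ⟨hz, hzt⟩
    refine ⟨Ioo_subset_cyl_of_mem_fullWords hβ hw hz, ?_⟩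
    have hfz := abs_sub_le_four_thirds_mul_of_lipschitzOnWith (c := cylStart β w) hL hn
      (hIcc ht) (hIcc (Ioo_subset_Icc_self hz))
    rw [hft, sub_zero] at hfz
    have hzt' := (lt_div_iff₀ (by positivity)).1 (abs_sub_lt_iff.2 ⟨by linarith [hzt.2],
      by linarith [hzt.1]⟩ : |z - t| < r / (4 * β ^ n))
    linarith

end BetaExpansion

theorem recurrence_cylinder_estimates (β : ℝ) (hβ : 1 < β) (κ : NNReal) (L : ℝ → ℝ)
    (hL : LipschitzOnWith κ L (Set.Icc 0 1))
    (hL01 : ∀ y ∈ Set.Icc (0:ℝ) 1, L y ∈ Set.Icc (0:ℝ) 1)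
    (φ : ℕ → ℝ) (hφ : ∀ k, φ k ∈ Set.Ioc (0:ℝ) 1)
    (n : ℕ) (hn : 3 * (κ : ℝ) < β ^ n) :
    (∀ w ∈ admWords β n,
        ({x ∈ cyl β w | |(betaT β)^[n] x - L x| < φ n}).OrdConnected ∧
          volume {x ∈ cyl β w | |(betaT β)^[n] x - L x| < φ n} ≤
            ENNReal.ofReal (3 * φ n / β ^ n)) ∧
      (∀ w ∈ fullWords β n,
        ENNReal.ofReal (φ n / (4 * β ^ n)) ≤
          volume {x ∈ cyl β w | |(betaT β)^[n] x - L x| < φ n}) := by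
  have hβ0 : 0 < β := zero_lt_one.trans hβ
  have hsep : ∀ w : Fin n → ℕ, {x ∈ cyl β w | |(betaT β)^[n] x - L x| < φ n} =
      {x ∈ cyl β w | |β ^ n * (x - cylStart β w) - L x| < φ n} := fun w =>
    Set.ext fun x => and_congr_right fun hx => by rw [iterate_betaT_eq_of_mem_cyl hβ0 hx]
  have hslope : ∀ w : Fin n → ℕ, ∀ u ∈ cyl β w, ∀ v ∈ cyl β w, u ≤ v →
      2 / 3 * β ^ n * (v - u) ≤
        (β ^ n * (v - cylStart β w) - L v) - (β ^ n * (u - cylStart β w) - L u) :=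
    fun w u hu v hv huv => two_thirds_mul_le_sub_of_lipschitzOnWith hL hn
      (Ico_subset_Icc_self hu.1) (Ico_subset_Icc_self hv.1) huv
  refine ⟨fun w _ => ?_, fun w hw => ?_⟩
  · rw [hsep]
    refine ⟨(ordConnected_cyl hβ0.le w).sep_abs_lt (fun u hu v hv huv => ?_) _, ?_⟩
    · exact sub_nonneg.1
        ((mul_nonneg (by positivity) (sub_nonneg.2 huv)).trans (hslope w u hu v hv huv))
    · calc _ ≤ ENNReal.ofReal (2 * φ n / (2 / 3 * β ^ n)) :=
            volume_sep_abs_lt_le (f := fun x => β ^ n * (x - cylStart β w) - L x)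
              (by positivity) (hslope w) _
        _ = ENNReal.ofReal (3 * φ n / β ^ n) := by congr 1; field_simp
  · rw [hsep]
    exact ofReal_le_volume_sep_cyl hβ0 hL hL01 hn hw (hφ n).1 (hφ n).2
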